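/- Let q = (τ⁺, τ⁻, ℘) be a couple and let m, n be nodes of q with m ≠ n and m ∼ n. Then m and n belong to different trees (one is a node of τ⁺ and the other a node of τ⁻) and have opposite signs, ι_m = −ι_n. Moreover, if h is a node of q with m ∼ n ∼ h, then h ∈ {m, n}. Consequently, every conjugacy class of the relation ∼ on the nodes of q contains either one or two nodes. -/

import Mathlib

/-!
Within one tree, two distinct nodes are separated by a leaf lying below exactly one of them,
and each leaf lies in exactly one leaf pair; hence conjugate nodes of the same tree coincide,
and since there are only two trees a conjugacy class has at most two elements.

For the signs, weigh each leaf pair `p` by the sign of its leaf `l⁺_p` in `τ⁺`: the weight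
`W(x) = Σ_p ι_{l⁺_p} 1_{x ∈ A_p}` (`Couple.pairWeight`) is constant on conjugacy classes.
The children of a branching node of sign `ι` carry the signs `ι, -ι, ι`, so the signs of the
leaves below any node add up to the sign of that node. As the two leaves of a pair have
opposite signs, this gives `W(x) = ι_x` for `x` in `τ⁺` and `W(x) = -ι_x` for `x` in `τ⁻`.
-/

noncomputable section
open scoped Classical

namespace WickNLS

/-! ## Ternary trees, signed ternary trees and couples -/

/-- Ternary trees: every non-leaf (branching) node has three ordered children. -/
inductive TTree : Type
  | leaf : TTree
  | node : TTree → TTree → TTree → TTree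
deriving DecidableEq

namespace TTree

/-- The order of a ternary tree: the number of its branching nodes. -/
def order : TTree → ℕ
  | leaf => 0
  | node a b c => order a + order b + order c + 1

/-- The subtree of `t` at the path `p` from the root (child indices `0,1,2` denote the
left, middle and right child, respectively), if `p` is a valid path. -/
def sub : TTree → List (Fin 3) → Option TTree
  | t, [] => some t
  | leaf, _ :: _ => none
  | node a b c, i :: p => sub (if i = 0 then a else if i = 1 then b else c) p

/-- `p` is (the path of) a node of `t`. -/
def valid (t : TTree) (p : List (Fin 3)) : Prop := (t.sub p).isSome = true

/-- `p` is (the path of) a leaf node of `t`. -/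
def isLeaf (t : TTree) (p : List (Fin 3)) : Prop := t.sub p = some leaf

/-- `p` is (the path of) a branching node of `t`. -/
def isBranch (t : TTree) (p : List (Fin 3)) : Prop := ∃ a b c, t.sub p = some (node a b c)

/-- Replace the subtree at the path `p` by `r`. -/
def replace : TTree → List (Fin 3) → TTree → TTree
  | _, [], r => r
  | leaf, _ :: _, _ => leaf
  | node a b c, i :: p, r =>
      if i = 0 then node (replace a p r) b c
      else if i = 1 then node a (replace b p r) c
      else node a b (replace c p r)

end TTree

/-- The sign `ι` of the node at path `p` of a signed ternary tree whose root carries the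
sign `σ`: because `ι_{b[j]} = ι_b · (-1)^(j+1)`, the sign is kept by the two outer
children and flipped by the middle child. -/
def nodeSign (σ : ℤ) (p : List (Fin 3)) : ℤ := σ * (-1) ^ (p.count (1 : Fin 3))

/-- Nodes of a couple: `(true, p)` is the node at path `p` of the positive tree `τ⁺`,
and `(false, p)` is the node at path `p` of the negative tree `τ⁻`. -/
abbrev CNode : Type := Bool × List (Fin 3)

/-- The (raw data of a) couple `(τ⁺, τ⁻, ℘)`: a positive tree `tp`, a negative tree `tm`,
the pairing `pr` sending each leaf of `tp` to its partner leaf of `tm`, and the inverse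
pairing `pl`. -/
structure Couple : Type where
  tp : TTree
  tm : TTree
  pr : List (Fin 3) → List (Fin 3)
  pl : List (Fin 3) → List (Fin 3)

namespace Couple

/-- The tree of the given side of the couple (`true` ↦ positive tree). -/
def tree (q : Couple) (b : Bool) : TTree := if b then q.tp else q.tm

/-- The sign of a node of a couple (the root of `τ⁺` has sign `+1`, that of `τ⁻` has
sign `-1`). -/
def sign (x : CNode) : ℤ := nodeSign (if x.1 then 1 else -1) x.2

/-- `x` is a node of the couple `q`. -/
def isNode (q : Couple) (x : CNode) : Prop := (q.tree x.1).valid x.2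

/-- `x` is a leaf of the couple `q`. -/
def isLeafN (q : Couple) (x : CNode) : Prop := (q.tree x.1).isLeaf x.2

/-- `x` is a branching node of the couple `q`. -/
def isBranchN (q : Couple) (x : CNode) : Prop := (q.tree x.1).isBranch x.2

/-- Well-formedness of a couple: the two trees have the same order; `pr` is a bijection
(with inverse `pl`) from the leaves of the positive tree onto the leaves of the negative
tree, pairing leaves of opposite signs.  The fields `pr_norm` and `pl_norm` normalize the
(irrelevant) values of `pr` and `pl` off their domains, so that equality of raw couples
is equality of couples. -/
structure IsCouple (q : Couple) : Prop where
  order_eq : q.tp.order = q.tm.order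
  pr_leaf : ∀ l, q.tp.isLeaf l → q.tm.isLeaf (q.pr l)
  pl_leaf : ∀ l, q.tm.isLeaf l → q.tp.isLeaf (q.pl l)
  pl_pr : ∀ l, q.tp.isLeaf l → q.pl (q.pr l) = l
  pr_pl : ∀ l, q.tm.isLeaf l → q.pr (q.pl l) = l
  sign_pr : ∀ l, q.tp.isLeaf l → sign (false, q.pr l) = - sign (true, l)
  pr_norm : ∀ l, ¬ q.tp.isLeaf l → q.pr l = []
  pl_norm : ∀ l, ¬ q.tm.isLeaf l → q.pl l = []

/-- The set `A_p` attached to the leaf pair `p = {(true, l), (false, q.pr l)}`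
(indexed by the leaf `l` of the positive tree): the set of all nodes `m` of `q` with
`m ⪰ (true, l)` or `m ⪰ (false, q.pr l)`, i.e. all weak ancestors of the two
paired leaves. -/
def pairSet (q : Couple) (l : List (Fin 3)) : Set CNode :=
  {x | (x.1 = true ∧ x.2 <+: l) ∨ (x.1 = false ∧ x.2 <+: q.pr l)}

/-- Two nodes `x, y` of `q` are conjugate, `x ∼ y`, if for every leaf pair `p ∈ ℘`
either both belong to `A_p` or neither does. -/
def Conj (q : Couple) (x y : CNode) : Prop :=
  ∀ l, q.tp.isLeaf l →
    ((x ∈ q.pairSet l ∧ y ∈ q.pairSet l) ∨ (x ∉ q.pairSet l ∧ y ∉ q.pairSet l))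

/-- The leaf of the leaf pair indexed by the `tp`-leaf `l` carrying the sign `+1`. -/
def posLeaf (q : Couple) (l : List (Fin 3)) : CNode :=
  if sign (true, l) = 1 then ((true, l) : CNode) else ((false, q.pr l) : CNode)

/-- The leaf of the leaf pair indexed by the `tp`-leaf `l` carrying the sign `-1`. -/
def negLeaf (q : Couple) (l : List (Fin 3)) : CNode :=
  if sign (true, l) = 1 then ((false, q.pr l) : CNode) else ((true, l) : CNode)

end Couple

/-- `x` is a weak ancestor of `y` (i.e. `x ⪰ y` fails ... this states `y ⪯ x` in the
subtree order: `y` lies in the subtree rooted at `x`), as nodes of a couple. -/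
def anc (x y : CNode) : Prop := x.1 = y.1 ∧ x.2 <+: y.2

/-- The indicator `1_{x ⪰ y}` (i.e. `x` is a weak ancestor of `y`), with values in `ℤ`. -/
def ind1 (x y : CNode) : ℤ := if anc x y then 1 else 0

theorem nodeSign_cons (σ : ℤ) (i : Fin 3) (p : List (Fin 3)) :
    nodeSign σ (i :: p) = nodeSign (if i = 1 then -σ else σ) p := by
  fin_cases i <;> simp [nodeSign, pow_succ]

theorem nodeSign_nil (σ : ℤ) : nodeSign σ [] = σ := by
  simp [nodeSign]

theorem nodeSign_eq_mul (σ : ℤ) (p : List (Fin 3)) : nodeSign σ p = σ * nodeSign 1 p := by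
  simp [nodeSign]

theorem sign_eq_mul_nodeSign (x : CNode) :
    Couple.sign x = (if x.1 then 1 else -1) * nodeSign 1 x.2 :=
  nodeSign_eq_mul _ _

namespace TTree

theorem sub_append (t : TTree) (p r : List (Fin 3)) :
    t.sub (p ++ r) = (t.sub p).bind (·.sub r) := by
  induction p generalizing t with
  | nil => rfl
  | cons i p ih =>
    cases t with
    | leaf => rfl
    | node a b c => exact ih _

theorem exists_isLeaf (t : TTree) : ∃ l, t.isLeaf l := by
  induction t with
  | leaf => exact ⟨[], rfl⟩
  | node a b c iha _ _ =>
    obtain ⟨l, hl⟩ := iha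
    exact ⟨0 :: l, hl⟩

theorem exists_isLeaf_of_prefix {t : TTree} {p : List (Fin 3)} (h : t.valid p) :
    ∃ l, t.isLeaf l ∧ p <+: l := by
  obtain ⟨s, hs⟩ := Option.isSome_iff_exists.1 h
  obtain ⟨l, hl⟩ := exists_isLeaf s
  exact ⟨p ++ l, by rw [isLeaf, sub_append, hs]; exact hl, List.prefix_append _ _⟩

/-- The leaf is taken below a sibling of `p ++ [i]`. -/
theorem exists_isLeaf_of_prefix_not_prefix {t : TTree} {p r : List (Fin 3)} {i : Fin 3}
    (h : t.valid (p ++ i :: r)) : ∃ l, t.isLeaf l ∧ p <+: l ∧ ¬ p ++ i :: r <+: l := by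
  rw [valid, sub_append] at h
  obtain ⟨s, hs⟩ := Option.isSome_iff_exists.1 (Option.isSome_of_isSome_bind h)
  cases s with
  | leaf => simp [hs, sub] at h
  | node a b c =>
    obtain ⟨j, hji⟩ : ∃ j : Fin 3, j ≠ i := by
      fin_cases i
      exacts [⟨1, by decide⟩, ⟨0, by decide⟩, ⟨0, by decide⟩]
    obtain ⟨l, hl⟩ := exists_isLeaf (if j = 0 then a else if j = 1 then b else c)
    refine ⟨p ++ j :: l, ?_, List.prefix_append _ _, ?_⟩
    · rw [isLeaf, sub_append, hs]
      exact hl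
    · rw [List.prefix_append_right_inj, List.cons_prefix_cons]
      exact fun hpre => hji hpre.1.symm

theorem exists_isLeaf_not_prefix_iff {t : TTree} {p p' : List (Fin 3)} (hp : t.valid p)
    (hp' : t.valid p') (hne : p ≠ p') : ∃ l, t.isLeaf l ∧ ¬ (p <+: l ↔ p' <+: l) := by
  by_cases hpp' : p <+: p'
  · obtain ⟨_ | ⟨i, r⟩, rfl⟩ := hpp'
    · exact absurd (List.append_nil p).symm hne
    · obtain ⟨l, hl, hpl, hp'l⟩ := exists_isLeaf_of_prefix_not_prefix hp'
      exact ⟨l, hl, fun h => hp'l (h.1 hpl)⟩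
  by_cases hp'p : p' <+: p
  · obtain ⟨_ | ⟨i, r⟩, rfl⟩ := hp'p
    · exact absurd (List.append_nil p') hne
    · obtain ⟨l, hl, hp'l, hpl⟩ := exists_isLeaf_of_prefix_not_prefix hp
      exact ⟨l, hl, fun h => hpl (h.2 hp'l)⟩
  obtain ⟨l, hl, hpl⟩ := exists_isLeaf_of_prefix hp
  refine ⟨l, hl, fun h => ?_⟩
  exact (List.prefix_or_prefix_of_prefix hpl (h.1 hpl)).elim hpp' hp'p

def leaves : TTree → List (List (Fin 3))
  | leaf => [[]]
  | node a b c =>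
      a.leaves.map (List.cons 0) ++ b.leaves.map (List.cons 1) ++ c.leaves.map (List.cons 2)

theorem mem_leaves {t : TTree} {l : List (Fin 3)} : l ∈ t.leaves ↔ t.isLeaf l := by
  induction t generalizing l with
  | leaf => cases l <;> simp [leaves, isLeaf, sub]
  | node a b c iha ihb ihc =>
    cases l with
    | nil => simp [leaves, isLeaf, sub]
    | cons i l => fin_cases i <;> simp [leaves, isLeaf, sub, iha, ihb, ihc]

theorem nodup_leaves (t : TTree) : t.leaves.Nodup := by
  induction t with
  | leaf => simp [leaves]
  | node a b c iha ihb ihc =>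
    have hdisj : ∀ {i j : Fin 3}, i ≠ j → ∀ L M : List (List (Fin 3)),
        (L.map (List.cons i)).Disjoint (M.map (List.cons j)) := by
      intro i j hij L M x hx hy
      obtain ⟨u, -, rfl⟩ := List.mem_map.1 hx
      obtain ⟨v, -, hv⟩ := List.mem_map.1 hy
      exact hij (List.cons.inj hv).1.symm
    refine ((iha.map List.cons_injective).append (ihb.map List.cons_injective)
      (hdisj (by decide) _ _)).append (ihc.map List.cons_injective) ?_
    exact List.disjoint_append_left.2 ⟨hdisj (by decide) _ _, hdisj (by decide) _ _⟩

theorem sum_map_leaves_node (a b c : TTree) (f : List (Fin 3) → ℤ) :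
    ((node a b c).leaves.map f).sum = (a.leaves.map (f <| 0 :: ·)).sum +
      (b.leaves.map (f <| 1 :: ·)).sum + (c.leaves.map (f <| 2 :: ·)).sum := by
  simp [leaves, Function.comp_def, add_assoc]

theorem sum_nodeSign_leaves_of_prefix {t : TTree} {p : List (Fin 3)} (hp : t.valid p)
    (σ : ℤ) : (t.leaves.map fun l => if p <+: l then nodeSign σ l else 0).sum = nodeSign σ p := by
  induction t generalizing σ p with
  | leaf =>
    cases p with
    | nil => simp [leaves]
    | cons i p => simp [valid, sub] at hp
  | node a b c iha ihb ihc =>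
    rw [sum_map_leaves_node]
    cases p with
    | nil =>
      have ha := iha (p := []) rfl σ
      have hb := ihb (p := []) rfl (-σ)
      have hc := ihc (p := []) rfl σ
      simp only [List.nil_prefix, ↓reduceIte, nodeSign_nil, nodeSign_cons, zero_ne_one,
        Fin.reduceEq] at ha hb hc ⊢
      rw [ha, hb, hc]
      ring
    | cons i p =>
      fin_cases i
      · simp [List.cons_prefix_cons, nodeSign_cons, iha hp]
      · simp [List.cons_prefix_cons, nodeSign_cons, ihb hp]
      · simp [List.cons_prefix_cons, nodeSign_cons, ihc hp]

end TTree

namespace Couple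

variable {q : Couple}

theorem conj_iff {x y : CNode} :
    q.Conj x y ↔ ∀ l, q.tp.isLeaf l → (x ∈ q.pairSet l ↔ y ∈ q.pairSet l) :=
  forall₂_congr fun _ _ => iff_iff_and_or_not_and_not.symm

theorem Conj.refl (q : Couple) (x : CNode) : q.Conj x x :=
  conj_iff.2 fun _ _ => Iff.rfl

theorem Conj.symm {x y : CNode} (h : q.Conj x y) : q.Conj y x :=
  conj_iff.2 fun l hl => (conj_iff.1 h l hl).symm

theorem Conj.trans {x y z : CNode} (h : q.Conj x y) (h' : q.Conj y z) : q.Conj x z :=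
  conj_iff.2 fun l hl => (conj_iff.1 h l hl).trans (conj_iff.1 h' l hl)

def pairLeaf (q : Couple) (b : Bool) (l : List (Fin 3)) : List (Fin 3) :=
  if b then l else q.pr l

theorem mem_pairSet_iff {x : CNode} {l : List (Fin 3)} :
    x ∈ q.pairSet l ↔ x.2 <+: q.pairLeaf x.1 l := by
  obtain ⟨_ | _, p⟩ := x <;> simp [pairSet, pairLeaf]

theorem isLeaf_pairLeaf (hq : q.IsCouple) (b : Bool) {l : List (Fin 3)} (hl : q.tp.isLeaf l) :
    (q.tree b).isLeaf (q.pairLeaf b l) := by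
  cases b
  · exact hq.pr_leaf l hl
  · exact hl

theorem exists_pairLeaf_eq (hq : q.IsCouple) {b : Bool} {l' : List (Fin 3)}
    (hl' : (q.tree b).isLeaf l') : ∃ l, q.tp.isLeaf l ∧ q.pairLeaf b l = l' := by
  cases b
  · exact ⟨q.pl l', hq.pl_leaf l' hl', hq.pr_pl l' hl'⟩
  · exact ⟨l', hl', rfl⟩

theorem pairLeaf_injOn (hq : q.IsCouple) (b : Bool) :
    Set.InjOn (q.pairLeaf b) {l | q.tp.isLeaf l} := by
  cases b
  · intro l hl l' hl' h
    rw [← hq.pl_pr l hl, ← hq.pl_pr l' hl']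
    exact congrArg q.pl h
  · exact fun _ _ _ _ => id

theorem perm_map_pairLeaf (hq : q.IsCouple) (b : Bool) :
    (q.tp.leaves.map (q.pairLeaf b)).Perm (q.tree b).leaves := by
  refine (List.perm_ext_iff_of_nodup ?_ (TTree.nodup_leaves _)).2 fun l' => ?_
  · exact (TTree.nodup_leaves _).map_on fun l hl l' hl' =>
      pairLeaf_injOn hq b (TTree.mem_leaves.1 hl) (TTree.mem_leaves.1 hl')
  · simp only [List.mem_map, TTree.mem_leaves]
    exact ⟨fun ⟨l, hl, h⟩ => h ▸ isLeaf_pairLeaf hq b hl, exists_pairLeaf_eq hq⟩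

theorem sign_eq_nodeSign_pairLeaf (hq : q.IsCouple) (b : Bool) {l : List (Fin 3)}
    (hl : q.tp.isLeaf l) : sign (true, l) = nodeSign 1 (q.pairLeaf b l) := by
  cases b
  · have h := hq.sign_pr l hl
    simp only [sign_eq_mul_nodeSign, pairLeaf, Bool.false_eq_true, if_false, if_true] at h ⊢
    linarith
  · simp [sign, pairLeaf]

def pairWeight (q : Couple) (x : CNode) : ℤ :=
  (q.tp.leaves.map fun l => if x ∈ q.pairSet l then sign (true, l) else 0).sum

theorem pairWeight_eq_of_conj {x y : CNode} (h : q.Conj x y) : q.pairWeight x = q.pairWeight y :=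
  congrArg List.sum <| List.map_congr_left fun l hl => by
    rw [conj_iff.1 h l (TTree.mem_leaves.1 hl)]

theorem pairWeight_eq (hq : q.IsCouple) {x : CNode} (hx : q.isNode x) :
    q.pairWeight x = nodeSign 1 x.2 := by
  let f : List (Fin 3) → ℤ := fun l' => if x.2 <+: l' then nodeSign 1 l' else 0
  calc q.pairWeight x = (q.tp.leaves.map (f ∘ q.pairLeaf x.1)).sum :=
        congrArg List.sum <| List.map_congr_left fun l hl => by
          simp [f, mem_pairSet_iff, sign_eq_nodeSign_pairLeaf hq x.1 (TTree.mem_leaves.1 hl)]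
    _ = ((q.tree x.1).leaves.map f).sum := by
        rw [← List.map_map, ((perm_map_pairLeaf hq x.1).map f).sum_eq]
    _ = nodeSign 1 x.2 := TTree.sum_nodeSign_leaves_of_prefix hx 1

variable {m n : CNode}

theorem eq_of_conj_of_fst_eq (hq : q.IsCouple) (hm : q.isNode m) (hn : q.isNode n)
    (hfst : m.1 = n.1) (hc : q.Conj m n) : m = n := by
  obtain ⟨b, p⟩ := m
  obtain ⟨b', p'⟩ := n
  obtain rfl : b = b' := hfst
  by_contra hne
  obtain ⟨l', hl', hsep⟩ := TTree.exists_isLeaf_not_prefix_iff hm hn fun h => hne (congrArg _ h)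
  obtain ⟨l, hl, rfl⟩ := exists_pairLeaf_eq hq hl'
  exact hsep (by simpa only [mem_pairSet_iff] using conj_iff.1 hc l hl)

theorem fst_ne_of_conj (hq : q.IsCouple) (hm : q.isNode m) (hn : q.isNode n) (hne : m ≠ n)
    (hc : q.Conj m n) : m.1 ≠ n.1 :=
  fun h => hne (eq_of_conj_of_fst_eq hq hm hn h hc)

theorem sign_eq_neg_of_conj (hq : q.IsCouple) (hm : q.isNode m) (hn : q.isNode n)
    (hne : m ≠ n) (hc : q.Conj m n) : sign m = -sign n := by
  have hweight : nodeSign 1 m.2 = nodeSign 1 n.2 := by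
    rw [← pairWeight_eq hq hm, ← pairWeight_eq hq hn, pairWeight_eq_of_conj hc]
  have hfst := fst_ne_of_conj hq hm hn hne hc
  rw [sign_eq_mul_nodeSign, sign_eq_mul_nodeSign, hweight, Bool.eq_not_of_ne hfst]
  cases n.1 <;> simp

theorem eq_or_eq_of_conj (hq : q.IsCouple) {h : CNode} (hm : q.isNode m) (hn : q.isNode n)
    (hh : q.isNode h) (hne : m ≠ n) (hmn : q.Conj m n) (hmh : q.Conj m h) : h = m ∨ h = n := by
  by_contra! ⟨hhm, hhn⟩
  have h₁ := fst_ne_of_conj hq hm hn hne hmn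
  have h₂ := fst_ne_of_conj hq hm hh (Ne.symm hhm) hmh
  have h₃ := fst_ne_of_conj hq hn hh (Ne.symm hhn) (hmn.symm.trans hmh)
  exact h₃ ((Bool.eq_not_of_ne h₁.symm).trans (Bool.eq_not_of_ne h₂.symm).symm)

end Couple

/-- Distinct conjugate nodes of a couple belong to different trees and
have opposite signs; a conjugacy class contains at most two nodes; consequently every
conjugacy class contains either one or two nodes. -/
theorem statement0 (q : Couple) (hq : q.IsCouple) :
    (∀ m n : CNode, q.isNode m → q.isNode n → m ≠ n → q.Conj m n →
      m.1 ≠ n.1 ∧ Couple.sign m = - Couple.sign n ∧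
      ∀ h : CNode, q.isNode h → q.Conj n h → h = m ∨ h = n) ∧
    (∀ x : CNode, q.isNode x →
      {y : CNode | q.isNode y ∧ q.Conj x y}.ncard = 1 ∨
      {y : CNode | q.isNode y ∧ q.Conj x y}.ncard = 2) := by
  refine ⟨fun m n hm hn hne hc => ⟨Couple.fst_ne_of_conj hq hm hn hne hc,
    Couple.sign_eq_neg_of_conj hq hm hn hne hc,
    fun h hh hnh => Couple.eq_or_eq_of_conj hq hm hn hh hne hc (hc.trans hnh)⟩, fun x hx => ?_⟩
  by_cases hpartner : ∃ y, q.isNode y ∧ q.Conj x y ∧ y ≠ x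
  · obtain ⟨y, hy, hxy, hyx⟩ := hpartner
    refine Or.inr (Set.ncard_eq_two.2 ⟨x, y, hyx.symm, Set.ext fun z => ⟨?_, ?_⟩⟩)
    · rintro ⟨hz, hxz⟩
      exact Couple.eq_or_eq_of_conj hq hx hy hz hyx.symm hxy hxz
    · rintro (rfl | rfl)
      exacts [⟨hx, Couple.Conj.refl q z⟩, ⟨hy, hxy⟩]
  · push Not at hpartner
    refine Or.inl (Set.ncard_eq_one.2 ⟨x, Set.ext fun z => ⟨?_, ?_⟩⟩)
    · rintro ⟨hz, hxz⟩
      exact hpartner z hz hxz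
    · rintro rfl
      exact ⟨hx, Couple.Conj.refl q z⟩

end WickNLS

end
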